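/- Let q ≥ 2 be an integer and define T_3 on appropriate points by the piecewise translations of the stated 6-IET. Then for every n with 2 ≤ n ≤ q, T_3^{2n−4}((2q^2−1)/(q^2(2q−1))) = (n q^2 − 1)/(q^2(2q−1)); in particular T_3^{2q−4}((2q^2−1)/(q^2(2q−1))) = (q^3−1)/(q^2(2q−1)), and one further application of T_3 yields 1/q^2. -/

import Mathlib

/-!
Put `D = q² (2q - 1)` and `xₙ = (n q² - 1) / D`. For `1 ≤ n < q` the point `xₙ` lies in the
first interval, whose translation by `q³ / D` lands it in the last interval, which translates
back by `(q³ - q²) / D`; so `T3² xₙ = xₙ₊₁`. Finally `x_q = (q³ - 1) / D` is the right end of the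
fourth interval, translated by `q (2 - q²) / D` to `(2q - 1) / D = 1 / q²`.
-/

/-- The 6-interval exchange transformation `T_3` on `[0,1)` (with a gap on which the
paper's map is undefined; there we return `x` as a junk value), for the geometric
armadillo tail with parameter `1/q`. -/
noncomputable def T3 (q : ℕ) (x : ℝ) : ℝ :=
  if x < ((q : ℝ) - 1) / (2 * q - 1) then x + (q : ℝ) / (2 * q - 1)
  else if x = ((q : ℝ) - 1) / (2 * q - 1) then 0
  else if x ≤ ((q : ℝ) ^ 2 - 1) / (q * (2 * q - 1)) then x + (2 - (q : ℝ)) / (2 * q - 1)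
  else if x ≤ ((q : ℝ) ^ 3 - 1) / ((q : ℝ) ^ 2 * (2 * q - 1)) then
    x + (2 - (q : ℝ) ^ 2) / (q * (2 * q - 1))
  else if x < ((q : ℝ) ^ 4 + q - 1) / ((q : ℝ) ^ 3 * (2 * q - 1)) then x
  else if x < ((q : ℝ) ^ 3 + q - 1) / ((q : ℝ) ^ 2 * (2 * q - 1)) then
    x + (1 - (q : ℝ) ^ 3) / ((q : ℝ) ^ 2 * (2 * q - 1))
  else if x < ((q : ℝ) ^ 2 + q - 1) / (q * (2 * q - 1)) then
    x + (1 - (q : ℝ) ^ 2) / (q * (2 * q - 1))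
  else x + (1 - (q : ℝ)) / (2 * q - 1)

namespace T3

noncomputable def orbitPoint (q n : ℕ) : ℝ :=
  ((n : ℝ) * q ^ 2 - 1) / (q ^ 2 * (2 * q - 1))

variable {q : ℕ}

lemma eq_of_lt (x : ℝ) (h : x < ((q : ℝ) - 1) / (2 * q - 1)) :
    T3 q x = x + (q : ℝ) / (2 * q - 1) := by
  rw [T3, if_pos h]

lemma eq_of_mem_Ioc (hq : 1 ≤ q) (x : ℝ)
    (hlo : ((q : ℝ) ^ 2 - 1) / (q * (2 * q - 1)) < x)
    (hhi : x ≤ ((q : ℝ) ^ 3 - 1) / ((q : ℝ) ^ 2 * (2 * q - 1))) :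
    T3 q x = x + (2 - (q : ℝ) ^ 2) / (q * (2 * q - 1)) := by
  have hq1 : (1 : ℝ) ≤ q := by exact_mod_cast hq
  have hd : (0 : ℝ) < 2 * q - 1 := by linarith
  have h1 : ((q : ℝ) - 1) / (2 * q - 1) < x := by
    refine lt_of_le_of_lt ?_ hlo
    rw [div_le_div_iff₀ hd (by positivity)]
    nlinarith
  rw [T3, if_neg h1.le.not_gt, if_neg h1.ne', if_neg hlo.not_ge, if_pos hhi]

/- Over the common denominator `q ^ 3 * (2 * q - 1)` the breakpoints of `T3 q` have numerators
`q⁴ - q³ ≤ q⁴ - q² ≤ q⁴ - q ≤ q⁴ + q - 1 ≤ q⁴ + q² - q ≤ q⁴ + q³ - q²`, in this order once `1 ≤ q`. -/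
lemma eq_of_le (hq : 1 ≤ q) (x : ℝ)
    (h : ((q : ℝ) ^ 2 + q - 1) / (q * (2 * q - 1)) ≤ x) :
    T3 q x = x + (1 - (q : ℝ)) / (2 * q - 1) := by
  have hq1 : (1 : ℝ) ≤ q := by exact_mod_cast hq
  have hqpos : (0 : ℝ) < q := by linarith
  have hd : (0 : ℝ) < 2 * q - 1 := by linarith
  have h1 : ((q : ℝ) - 1) / (2 * q - 1) < x := by
    refine lt_of_lt_of_le ?_ h
    rw [div_lt_div_iff₀ hd (by positivity)]
    nlinarith
  have h3 : ((q : ℝ) ^ 3 - 1) / ((q : ℝ) ^ 2 * (2 * q - 1)) < x := by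
    refine lt_of_lt_of_le ?_ h
    rw [div_lt_div_iff₀ (by positivity) (by positivity)]
    nlinarith [mul_pos (mul_pos hqpos hd) (show (0 : ℝ) < q ^ 2 - q + 1 by nlinarith)]
  have h4 : ((q : ℝ) ^ 4 + q - 1) / ((q : ℝ) ^ 3 * (2 * q - 1)) ≤ x := by
    refine le_trans ?_ h
    rw [div_le_div_iff₀ (by positivity) (by positivity)]
    nlinarith [mul_nonneg (mul_pos hqpos hd).le
      (show (0 : ℝ) ≤ (q - 1) ^ 2 * (q + 1) by positivity)]
  have h5 : ((q : ℝ) ^ 3 + q - 1) / ((q : ℝ) ^ 2 * (2 * q - 1)) ≤ x := by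
    refine le_trans ?_ h
    rw [div_le_div_iff₀ (by positivity) (by positivity)]
    nlinarith [mul_nonneg (mul_pos hqpos hd).le (sq_nonneg ((q : ℝ) - 1))]
  have h2 : ((q : ℝ) ^ 2 - 1) / (q * (2 * q - 1)) < x := by
    refine lt_of_le_of_lt ?_ h3
    rw [div_le_div_iff₀ (by positivity) (by positivity)]
    nlinarith [mul_nonneg (mul_pos hqpos hd).le (show (0 : ℝ) ≤ q - 1 by linarith)]
  rw [T3, if_neg h1.le.not_gt, if_neg h1.ne', if_neg h2.not_ge, if_neg h3.not_ge,
    if_neg h4.not_gt, if_neg h5.not_gt, if_neg h.not_gt]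

lemma orbitPoint_two : orbitPoint q 2 = (2 * (q : ℝ) ^ 2 - 1) / (q ^ 2 * (2 * q - 1)) := by
  rw [orbitPoint]; norm_num

lemma orbitPoint_self : orbitPoint q q = ((q : ℝ) ^ 3 - 1) / (q ^ 2 * (2 * q - 1)) := by
  rw [orbitPoint]; ring

lemma iterate_two_orbitPoint {n : ℕ} (hn : 1 ≤ n) (hnq : n < q) :
    (T3 q)^[2] (orbitPoint q n) = orbitPoint q (n + 1) := by
  have hq1 : (1 : ℝ) ≤ q := by exact_mod_cast hn.trans hnq.le
  have hn1 : (1 : ℝ) ≤ n := by exact_mod_cast hn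
  have hnq' : (n : ℝ) + 1 ≤ q := by exact_mod_cast hnq
  have hqpos : (0 : ℝ) < q := by linarith
  have hd : (0 : ℝ) < 2 * q - 1 := by linarith
  have hD : (0 : ℝ) < q ^ 2 * (2 * q - 1) := by positivity
  have hfirst : orbitPoint q n < ((q : ℝ) - 1) / (2 * q - 1) := by
    rw [orbitPoint, div_lt_div_iff₀ hD hd]
    nlinarith [mul_nonneg (mul_nonneg hd.le (show (0 : ℝ) ≤ q - 1 - n by linarith))
      (sq_nonneg (q : ℝ))]
  have hmid : orbitPoint q n + q / (2 * q - 1) =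
      ((n : ℝ) * q ^ 2 + q ^ 3 - 1) / (q ^ 2 * (2 * q - 1)) := by
    rw [orbitPoint]; field_simp; ring
  have hlast : ((q : ℝ) ^ 2 + q - 1) / (q * (2 * q - 1)) ≤
      ((n : ℝ) * q ^ 2 + q ^ 3 - 1) / (q ^ 2 * (2 * q - 1)) := by
    rw [div_le_div_iff₀ (by positivity) hD]
    nlinarith [mul_nonneg (mul_pos hqpos hd).le
      (show (0 : ℝ) ≤ (n - 1) * q ^ 2 + q - 1 by nlinarith)]
  rw [Function.iterate_succ_apply, Function.iterate_one, eq_of_lt _ hfirst, hmid,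
    eq_of_le (by omega) _ hlast, orbitPoint]
  field_simp
  push_cast
  ring

lemma iterate_orbitPoint {m : ℕ} (hm : 1 ≤ m) :
    ∀ k, m + k ≤ q → (T3 q)^[2 * k] (orbitPoint q m) = orbitPoint q (m + k)
  | 0, _ => rfl
  | k + 1, hk => by
    rw [mul_add, mul_one, add_comm, Function.iterate_add_apply,
      iterate_orbitPoint hm k (by omega), iterate_two_orbitPoint (by omega) (by omega),
      add_assoc]

lemma apply_orbitPoint_self (hq : 2 ≤ q) : T3 q (orbitPoint q q) = 1 / (q : ℝ) ^ 2 := by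
  have hq2 : (2 : ℝ) ≤ q := by exact_mod_cast hq
  have hqpos : (0 : ℝ) < q := by linarith
  have hd : (0 : ℝ) < 2 * q - 1 := by linarith
  rw [orbitPoint_self, eq_of_mem_Ioc (by omega) _ ?_ le_rfl]
  · rw [div_add_div _ _ (by positivity) (by positivity),
      div_eq_div_iff (by positivity) (by positivity)]
    ring
  · rw [div_lt_div_iff₀ (by positivity) (by positivity)]
    nlinarith [mul_pos (mul_pos hqpos hd) (show (0 : ℝ) < q - 1 by linarith)]

end T3

theorem bsc3_iet_orbit (q : ℕ) (hq : 2 ≤ q) :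
    (∀ n : ℕ, 2 ≤ n → n ≤ q →
      (T3 q)^[2 * n - 4] ((2 * (q : ℝ) ^ 2 - 1) / ((q : ℝ) ^ 2 * (2 * q - 1))) =
        ((n : ℝ) * (q : ℝ) ^ 2 - 1) / ((q : ℝ) ^ 2 * (2 * q - 1))) ∧
    (T3 q)^[2 * q - 4] ((2 * (q : ℝ) ^ 2 - 1) / ((q : ℝ) ^ 2 * (2 * q - 1))) =
      ((q : ℝ) ^ 3 - 1) / ((q : ℝ) ^ 2 * (2 * q - 1)) ∧
    T3 q (((q : ℝ) ^ 3 - 1) / ((q : ℝ) ^ 2 * (2 * q - 1))) = 1 / (q : ℝ) ^ 2 := by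
  have horbit : ∀ n : ℕ, 2 ≤ n → n ≤ q →
      (T3 q)^[2 * n - 4] (T3.orbitPoint q 2) = T3.orbitPoint q n := by
    intro n hn hnq
    obtain ⟨k, rfl⟩ := Nat.exists_eq_add_of_le hn
    rw [show 2 * (2 + k) - 4 = 2 * k by omega]
    exact T3.iterate_orbitPoint (by norm_num) k hnq
  rw [← T3.orbitPoint_two, ← T3.orbitPoint_self]
  exact ⟨horbit, horbit q hq le_rfl, T3.apply_orbitPoint_self hq⟩
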